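/- arXiv:2108.12813 — 2 statements merged into one kernel-verified Lean document; each statement's English description precedes it below -/
import Mathlib

section
/- The differential operators on smooth functions of (x₁, x₂, y₁, y₂, z, w) defined by π_R(a_1^+) = ∂_{x₁}, π_R(a_2^+) = ∂_{x₂} + (w/2)∂_{x₁}, π_R(b_1^+) = ∂_{y₁}, π_R(b_2^+) = ∂_{y₂} + (w²/24)∂_{y₁} + (w/2)∂_z, π_R(c^+) = ∂_z + (w/4)∂_{y₁}, π_R(d^+) = ∂_w − (1/4)(z + y₂w/6)∂_{y₁} − (y₂/2)∂_z satisfy [π_R(b_2^+), π_R(d^+)] = −π_R(c^+), [π_R(a_2^+), π_R(d^+)] = −(1/2)π_R(a_1^+), [π_R(c^+), π_R(d^+)] = −(1/2)π_R(b_1^+), and all other pairwise commutators among these six operators vanish. -/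
/-- smooth functions of six real variables -/
abbrev F6 := (Fin 6 → ℝ) → ℝ

/-- partial derivative in the i-th coordinate -/
noncomputable def pd (i : Fin 6) (f : F6) : F6 := fun x => fderiv ℝ f x (Pi.single i 1)

/-- differential operators -/
abbrev Op := F6 → F6

/-- commutator of operators -/
def opComm (A B : Op) : Op := fun f => A (B f) - B (A f)

/- Coordinates: 0 = x₁, 1 = x₂, 2 = y₁, 3 = y₂, 4 = z, 5 = w -/

noncomputable def Ra1 : Op := pd 0
noncomputable def Ra2 : Op := fun f x => pd 1 f x + x 5 / 2 * pd 0 f x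
noncomputable def Rb1 : Op := pd 2
noncomputable def Rb2 : Op := fun f x =>
  pd 3 f x + x 5 ^ 2 / 24 * pd 2 f x + x 5 / 2 * pd 4 f x
noncomputable def Rc : Op := fun f x => pd 4 f x + x 5 / 4 * pd 2 f x
noncomputable def Rd : Op := fun f x =>
  pd 5 f x - 1 / 4 * (x 4 + x 3 * x 5 / 6) * pd 2 f x - x 3 / 2 * pd 4 f x

/-! ### Basic calculus toolkit -/

lemma contDiff_pd {f : F6} (hf : ContDiff ℝ (⊤ : ℕ∞) f) (i : Fin 6) : ContDiff ℝ (⊤ : ℕ∞) (pd i f) :=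
  (hf.fderiv_right (le_refl _)).clm_apply contDiff_const

lemma pd_comm {f : F6} (hf : ContDiff ℝ (⊤ : ℕ∞) f) (i j : Fin 6) (x : Fin 6 → ℝ) :
    pd i (pd j f) x = pd j (pd i f) x := by
  have hsymm : IsSymmSndFDerivAt ℝ f x := hf.contDiffAt.isSymmSndFDerivAt (by rw [minSmoothness_of_isRCLikeNormedField]; have h2t := WithTop.coe_le_coe.mpr (le_top : (2 : ℕ∞) ≤ ⊤); exact h2t)
  have hdf : DifferentiableAt ℝ (fderiv ℝ f) x :=
    ((hf.fderiv_right (m := (⊤ : ℕ∞)) (le_refl _)).differentiable (by simp)).differentiableAt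
  have h2 : ∀ k l : Fin 6, pd k (pd l f) x
      = fderiv ℝ (fderiv ℝ f) x (Pi.single k 1) (Pi.single l 1) := by
    intro k l
    show fderiv ℝ (fun y => (fderiv ℝ f y) (Pi.single l 1)) x (Pi.single k 1) = _
    rw [fderiv_clm_apply hdf (differentiableAt_const _)]
    simp
  rw [h2, h2, hsymm.eq]

lemma pd_sum_mul (c g : Fin 6 → F6) (hc : ∀ j, ContDiff ℝ (⊤ : ℕ∞) (c j))
    (hg : ∀ j, ContDiff ℝ (⊤ : ℕ∞) (g j)) (i : Fin 6) (x : Fin 6 → ℝ) :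
    pd i (fun y => ∑ j, c j y * g j y) x
      = ∑ j, (pd i (c j) x * g j x + c j x * pd i (g j) x) := by
  show fderiv ℝ (fun y => ∑ j, c j y * g j y) x (Pi.single i 1) = _
  rw [fderiv_fun_sum (A := fun j y => c j y * g j y) (fun j _ => (((hc j).differentiable (by simp)).differentiableAt.mul
    ((hg j).differentiable (by simp)).differentiableAt))]
  rw [ContinuousLinearMap.sum_apply]
  refine Finset.sum_congr rfl fun j _ => ?_
  rw [fderiv_fun_mul (((hc j).differentiable (by simp)).differentiableAt)
    (((hg j).differentiable (by simp)).differentiableAt)]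
  simp only [ContinuousLinearMap.add_apply, ContinuousLinearMap.smul_apply, smul_eq_mul]
  show _ = fderiv ℝ (c j) x (Pi.single i 1) * g j x + c j x * fderiv ℝ (g j) x (Pi.single i 1)
  ring

/-- First-order operator with coefficient vector `c`. -/
noncomputable def T (c : Fin 6 → F6) : Op := fun f x => ∑ i, c i x * pd i f x

lemma comm_T (c d : Fin 6 → F6) (hc : ∀ i, ContDiff ℝ (⊤ : ℕ∞) (c i)) (hd : ∀ i, ContDiff ℝ (⊤ : ℕ∞) (d i))
    (f : F6) (hf : ContDiff ℝ (⊤ : ℕ∞) f) :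
    opComm (T c) (T d) f
      = fun x => ∑ j, (∑ i, (c i x * pd i (d j) x - d i x * pd i (c j) x)) * pd j f x := by
  funext x
  have hpf : ∀ j, ContDiff ℝ (⊤ : ℕ∞) (pd j f) := contDiff_pd hf
  show T c (T d f) x - T d (T c f) x = _
  have e1 : T c (T d f) x = ∑ i, c i x *
      ∑ j, (pd i (d j) x * pd j f x + d j x * pd i (pd j f) x) := by
    refine Finset.sum_congr rfl fun i _ => ?_
    rw [show T d f = fun y => ∑ j, d j y * pd j f y from rfl, pd_sum_mul d _ hd hpf]
  have e2 : T d (T c f) x = ∑ i, d i x *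
      ∑ j, (pd i (c j) x * pd j f x + c j x * pd i (pd j f) x) := by
    refine Finset.sum_congr rfl fun i _ => ?_
    rw [show T c f = fun y => ∑ j, c j y * pd j f y from rfl, pd_sum_mul c _ hc hpf]
  rw [e1, e2]
  simp only [Finset.mul_sum, mul_add, Finset.sum_sub_distrib, Finset.sum_add_distrib,
    Finset.sum_mul, sub_mul]
  rw [Finset.sum_comm (f := fun i j => c i x * (d j x * pd i (pd j f) x))]
  have cancel : ∀ j i, c j x * (d i x * pd j (pd i f) x) = d i x * (c j x * pd i (pd j f) x) := by
    intro j i; rw [pd_comm hf]; ring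
  simp only [cancel]
  rw [Finset.sum_comm (f := fun j i => c i x * pd i (d j) x * pd j f x),
      Finset.sum_comm (f := fun j i => d i x * pd i (c j) x * pd j f x)]
  ring_nf

/-! ### Derivatives of coefficient functions -/

lemma pd_const (i : Fin 6) (a : ℝ) (x : Fin 6 → ℝ) : pd i (fun _ => a) x = 0 := by
  simp [pd]

lemma pd_coord (i j : Fin 6) (x : Fin 6 → ℝ) :
    pd i (fun y => y j) x = if i = j then 1 else 0 := by
  have : fderiv ℝ (fun y : Fin 6 → ℝ => y j) x = ContinuousLinearMap.proj j :=
    (ContinuousLinearMap.proj j : (Fin 6 → ℝ) →L[ℝ] ℝ).fderiv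
  simp [pd, this, Pi.single_apply, eq_comm]

lemma pd_add {g h : F6} (i : Fin 6) {x : Fin 6 → ℝ} (hg : DifferentiableAt ℝ g x)
    (hh : DifferentiableAt ℝ h x) :
    pd i (fun y => g y + h y) x = pd i g x + pd i h x := by
  simp [pd, fderiv_fun_add hg hh]

lemma pd_mul {g h : F6} (i : Fin 6) {x : Fin 6 → ℝ} (hg : DifferentiableAt ℝ g x)
    (hh : DifferentiableAt ℝ h x) :
    pd i (fun y => g y * h y) x = pd i g x * h x + g x * pd i h x := by
  simp only [pd, fderiv_fun_mul hg hh, ContinuousLinearMap.add_apply,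
    ContinuousLinearMap.smul_apply, smul_eq_mul]
  ring

lemma pd_neg {g : F6} (i : Fin 6) (x : Fin 6 → ℝ) :
    pd i (fun y => -g y) x = -pd i g x := by
  simp [pd, fderiv_neg]

lemma pd_div_const {g : F6} (i : Fin 6) (a : ℝ) {x : Fin 6 → ℝ}
    (hg : DifferentiableAt ℝ g x) :
    pd i (fun y => g y / a) x = pd i g x / a := by
  simp only [pd, div_eq_mul_inv, fderiv_mul_const hg a⁻¹, ContinuousLinearMap.smul_apply,
    smul_eq_mul]
  ring

lemma diff_coord (j : Fin 6) (x : Fin 6 → ℝ) :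
    DifferentiableAt ℝ (fun y : Fin 6 → ℝ => y j) x := by fun_prop

lemma pd_g1 (i : Fin 6) (x : Fin 6 → ℝ) :
    pd i (fun y => y 5 / 2) x = if i = 5 then 1/2 else 0 := by
  rw [pd_div_const _ _ (diff_coord _ x), pd_coord]; split <;> norm_num

lemma pd_g2 (i : Fin 6) (x : Fin 6 → ℝ) :
    pd i (fun y => y 5 * y 5 / 24) x = if i = 5 then x 5 / 12 else 0 := by
  rw [pd_div_const _ _ (by fun_prop), pd_mul i (diff_coord 5 x) (diff_coord 5 x), pd_coord]
  split <;> [skip; simp] <;> ring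

lemma pd_g3 (i : Fin 6) (x : Fin 6 → ℝ) :
    pd i (fun y => y 5 / 4) x = if i = 5 then 1/4 else 0 := by
  rw [pd_div_const _ _ (diff_coord _ x), pd_coord]; split <;> norm_num

lemma pd_g5 (i : Fin 6) (x : Fin 6 → ℝ) :
    pd i (fun y => -(y 3 / 2)) x = if i = 3 then -(1/2) else 0 := by
  rw [pd_neg, pd_div_const _ _ (diff_coord _ x), pd_coord]; split <;> norm_num

lemma pd_g4 (i : Fin 6) (x : Fin 6 → ℝ) :
    pd i (fun y => -(1 / 4 * (y 4 + y 3 * y 5 / 6))) x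
      = -(1/4 * ((if i = 4 then 1 else 0)
          + ((if i = 3 then 1 else 0) * x 5 + x 3 * (if i = 5 then 1 else 0)) / 6)) := by
  have h1 : DifferentiableAt ℝ (fun y : Fin 6 → ℝ => y 4 + y 3 * y 5 / 6) x := by fun_prop
  rw [show (fun y : Fin 6 → ℝ => -(1 / 4 * (y 4 + y 3 * y 5 / 6)))
      = fun y => -((fun z : Fin 6 → ℝ => (1:ℝ)/4) y * (fun y : Fin 6 → ℝ => y 4 + y 3 * y 5 / 6) y)
      from rfl, pd_neg, pd_mul i (by fun_prop) h1, pd_const]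
  rw [show (fun y : Fin 6 → ℝ => y 4 + y 3 * y 5 / 6)
      = fun y => (fun y : Fin 6 → ℝ => y 4) y + (fun y : Fin 6 → ℝ => y 3 * y 5 / 6) y from rfl,
    pd_add i (diff_coord 4 x) (by fun_prop), pd_coord, pd_div_const _ _ (by fun_prop),
    pd_mul i (diff_coord 3 x) (diff_coord 5 x), pd_coord, pd_coord]
  ring

/-! ### Coefficient vectors -/

noncomputable def ca1 : Fin 6 → F6 :=
  ![fun _ => 1, fun _ => 0, fun _ => 0, fun _ => 0, fun _ => 0, fun _ => 0]
noncomputable def ca2 : Fin 6 → F6 :=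
  ![fun y => y 5 / 2, fun _ => 1, fun _ => 0, fun _ => 0, fun _ => 0, fun _ => 0]
noncomputable def cb1 : Fin 6 → F6 :=
  ![fun _ => 0, fun _ => 0, fun _ => 1, fun _ => 0, fun _ => 0, fun _ => 0]
noncomputable def cb2 : Fin 6 → F6 :=
  ![fun _ => 0, fun _ => 0, fun y => y 5 * y 5 / 24, fun _ => 1, fun y => y 5 / 2, fun _ => 0]
noncomputable def cc : Fin 6 → F6 :=
  ![fun _ => 0, fun _ => 0, fun y => y 5 / 4, fun _ => 0, fun _ => 1, fun _ => 0]
noncomputable def cd6 : Fin 6 → F6 :=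
  ![fun _ => 0, fun _ => 0, fun y => -(1 / 4 * (y 4 + y 3 * y 5 / 6)), fun _ => 0,
    fun y => -(y 3 / 2), fun _ => 1]

lemma cdc (a : ℝ) : ContDiff ℝ (⊤ : ℕ∞) (fun _ : Fin 6 → ℝ => a) := contDiff_const
lemma cdp (j : Fin 6) : ContDiff ℝ (⊤ : ℕ∞) (fun y : Fin 6 → ℝ => y j) :=
  (ContinuousLinearMap.proj j : (Fin 6 → ℝ) →L[ℝ] ℝ).contDiff
lemma cdg1 : ContDiff ℝ (⊤ : ℕ∞) (fun y : Fin 6 → ℝ => y 5 / 2) := (cdp 5).div_const 2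
lemma cdg2 : ContDiff ℝ (⊤ : ℕ∞) (fun y : Fin 6 → ℝ => y 5 * y 5 / 24) :=
  ((cdp 5).mul (cdp 5)).div_const 24
lemma cdg3 : ContDiff ℝ (⊤ : ℕ∞) (fun y : Fin 6 → ℝ => y 5 / 4) := (cdp 5).div_const 4
lemma cdg4 : ContDiff ℝ (⊤ : ℕ∞) (fun y : Fin 6 → ℝ => -(1 / 4 * (y 4 + y 3 * y 5 / 6))) :=
  (contDiff_const.mul ((cdp 4).add (((cdp 3).mul (cdp 5)).div_const 6))).neg
lemma cdg5 : ContDiff ℝ (⊤ : ℕ∞) (fun y : Fin 6 → ℝ => -(y 3 / 2)) := ((cdp 3).div_const 2).neg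

lemma hca1 : ∀ i, ContDiff ℝ (⊤ : ℕ∞) (ca1 i) := by
  intro i; fin_cases i
  exacts [cdc 1, cdc 0, cdc 0, cdc 0, cdc 0, cdc 0]
lemma hca2 : ∀ i, ContDiff ℝ (⊤ : ℕ∞) (ca2 i) := by
  intro i; fin_cases i
  exacts [cdg1, cdc 1, cdc 0, cdc 0, cdc 0, cdc 0]
lemma hcb1 : ∀ i, ContDiff ℝ (⊤ : ℕ∞) (cb1 i) := by
  intro i; fin_cases i
  exacts [cdc 0, cdc 0, cdc 1, cdc 0, cdc 0, cdc 0]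
lemma hcb2 : ∀ i, ContDiff ℝ (⊤ : ℕ∞) (cb2 i) := by
  intro i; fin_cases i
  exacts [cdc 0, cdc 0, cdg2, cdc 1, cdg1, cdc 0]
lemma hcc : ∀ i, ContDiff ℝ (⊤ : ℕ∞) (cc i) := by
  intro i; fin_cases i
  exacts [cdc 0, cdc 0, cdg3, cdc 0, cdc 1, cdc 0]
lemma hcd6 : ∀ i, ContDiff ℝ (⊤ : ℕ∞) (cd6 i) := by
  intro i; fin_cases i
  exacts [cdc 0, cdc 0, cdg4, cdc 0, cdg5, cdc 1]

@[simp] lemma ca1_0 : ca1 0 = (fun _ => (1:ℝ) : F6) := rfl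
@[simp] lemma ca1_1 : ca1 1 = (fun _ => (0:ℝ) : F6) := rfl
@[simp] lemma ca1_2 : ca1 2 = (fun _ => (0:ℝ) : F6) := rfl
@[simp] lemma ca1_3 : ca1 3 = (fun _ => (0:ℝ) : F6) := rfl
@[simp] lemma ca1_4 : ca1 4 = (fun _ => (0:ℝ) : F6) := rfl
@[simp] lemma ca1_5 : ca1 5 = (fun _ => (0:ℝ) : F6) := rfl
@[simp] lemma ca2_0 : ca2 0 = (fun y => y 5 / 2 : F6) := rfl
@[simp] lemma ca2_1 : ca2 1 = (fun _ => (1:ℝ) : F6) := rfl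
@[simp] lemma ca2_2 : ca2 2 = (fun _ => (0:ℝ) : F6) := rfl
@[simp] lemma ca2_3 : ca2 3 = (fun _ => (0:ℝ) : F6) := rfl
@[simp] lemma ca2_4 : ca2 4 = (fun _ => (0:ℝ) : F6) := rfl
@[simp] lemma ca2_5 : ca2 5 = (fun _ => (0:ℝ) : F6) := rfl
@[simp] lemma cb1_0 : cb1 0 = (fun _ => (0:ℝ) : F6) := rfl
@[simp] lemma cb1_1 : cb1 1 = (fun _ => (0:ℝ) : F6) := rfl
@[simp] lemma cb1_2 : cb1 2 = (fun _ => (1:ℝ) : F6) := rfl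
@[simp] lemma cb1_3 : cb1 3 = (fun _ => (0:ℝ) : F6) := rfl
@[simp] lemma cb1_4 : cb1 4 = (fun _ => (0:ℝ) : F6) := rfl
@[simp] lemma cb1_5 : cb1 5 = (fun _ => (0:ℝ) : F6) := rfl
@[simp] lemma cb2_0 : cb2 0 = (fun _ => (0:ℝ) : F6) := rfl
@[simp] lemma cb2_1 : cb2 1 = (fun _ => (0:ℝ) : F6) := rfl
@[simp] lemma cb2_2 : cb2 2 = (fun y => y 5 * y 5 / 24 : F6) := rfl
@[simp] lemma cb2_3 : cb2 3 = (fun _ => (1:ℝ) : F6) := rfl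
@[simp] lemma cb2_4 : cb2 4 = (fun y => y 5 / 2 : F6) := rfl
@[simp] lemma cb2_5 : cb2 5 = (fun _ => (0:ℝ) : F6) := rfl
@[simp] lemma cc_0 : cc 0 = (fun _ => (0:ℝ) : F6) := rfl
@[simp] lemma cc_1 : cc 1 = (fun _ => (0:ℝ) : F6) := rfl
@[simp] lemma cc_2 : cc 2 = (fun y => y 5 / 4 : F6) := rfl
@[simp] lemma cc_3 : cc 3 = (fun _ => (0:ℝ) : F6) := rfl
@[simp] lemma cc_4 : cc 4 = (fun _ => (1:ℝ) : F6) := rfl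
@[simp] lemma cc_5 : cc 5 = (fun _ => (0:ℝ) : F6) := rfl
@[simp] lemma cd6_0 : cd6 0 = (fun _ => (0:ℝ) : F6) := rfl
@[simp] lemma cd6_1 : cd6 1 = (fun _ => (0:ℝ) : F6) := rfl
@[simp] lemma cd6_2 : cd6 2 = (fun y => -(1 / 4 * (y 4 + y 3 * y 5 / 6)) : F6) := rfl
@[simp] lemma cd6_3 : cd6 3 = (fun _ => (0:ℝ) : F6) := rfl
@[simp] lemma cd6_4 : cd6 4 = (fun y => -(y 3 / 2) : F6) := rfl
@[simp] lemma cd6_5 : cd6 5 = (fun _ => (1:ℝ) : F6) := rfl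


lemma Ra1_eq (f : F6) : Ra1 f = T ca1 f := by
  funext x
  simp only [T, Fin.sum_univ_six, ca1_0, ca1_1, ca1_2, ca1_3, ca1_4, ca1_5, ca2_0, ca2_1, ca2_2, ca2_3, ca2_4, ca2_5, cb1_0, cb1_1, cb1_2, cb1_3, cb1_4, cb1_5, cb2_0, cb2_1, cb2_2, cb2_3, cb2_4, cb2_5, cc_0, cc_1, cc_2, cc_3, cc_4, cc_5, cd6_0, cd6_1, cd6_2, cd6_3, cd6_4, cd6_5, Ra1]
  ring
lemma Ra2_eq (f : F6) : Ra2 f = T ca2 f := by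
  funext x
  simp only [T, Fin.sum_univ_six, ca1_0, ca1_1, ca1_2, ca1_3, ca1_4, ca1_5, ca2_0, ca2_1, ca2_2, ca2_3, ca2_4, ca2_5, cb1_0, cb1_1, cb1_2, cb1_3, cb1_4, cb1_5, cb2_0, cb2_1, cb2_2, cb2_3, cb2_4, cb2_5, cc_0, cc_1, cc_2, cc_3, cc_4, cc_5, cd6_0, cd6_1, cd6_2, cd6_3, cd6_4, cd6_5, Ra2]
  ring_nf
lemma Rb1_eq (f : F6) : Rb1 f = T cb1 f := by
  funext x
  simp only [T, Fin.sum_univ_six, ca1_0, ca1_1, ca1_2, ca1_3, ca1_4, ca1_5, ca2_0, ca2_1, ca2_2, ca2_3, ca2_4, ca2_5, cb1_0, cb1_1, cb1_2, cb1_3, cb1_4, cb1_5, cb2_0, cb2_1, cb2_2, cb2_3, cb2_4, cb2_5, cc_0, cc_1, cc_2, cc_3, cc_4, cc_5, cd6_0, cd6_1, cd6_2, cd6_3, cd6_4, cd6_5, Rb1]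
  ring
lemma Rb2_eq (f : F6) : Rb2 f = T cb2 f := by
  funext x
  simp only [T, Fin.sum_univ_six, ca1_0, ca1_1, ca1_2, ca1_3, ca1_4, ca1_5, ca2_0, ca2_1, ca2_2, ca2_3, ca2_4, ca2_5, cb1_0, cb1_1, cb1_2, cb1_3, cb1_4, cb1_5, cb2_0, cb2_1, cb2_2, cb2_3, cb2_4, cb2_5, cc_0, cc_1, cc_2, cc_3, cc_4, cc_5, cd6_0, cd6_1, cd6_2, cd6_3, cd6_4, cd6_5, Rb2]
  ring_nf
lemma Rc_eq (f : F6) : Rc f = T cc f := by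
  funext x
  simp only [T, Fin.sum_univ_six, ca1_0, ca1_1, ca1_2, ca1_3, ca1_4, ca1_5, ca2_0, ca2_1, ca2_2, ca2_3, ca2_4, ca2_5, cb1_0, cb1_1, cb1_2, cb1_3, cb1_4, cb1_5, cb2_0, cb2_1, cb2_2, cb2_3, cb2_4, cb2_5, cc_0, cc_1, cc_2, cc_3, cc_4, cc_5, cd6_0, cd6_1, cd6_2, cd6_3, cd6_4, cd6_5, Rc]
  ring_nf
lemma Rd_eq (f : F6) : Rd f = T cd6 f := by
  funext x
  simp only [T, Fin.sum_univ_six, ca1_0, ca1_1, ca1_2, ca1_3, ca1_4, ca1_5, ca2_0, ca2_1, ca2_2, ca2_3, ca2_4, ca2_5, cb1_0, cb1_1, cb1_2, cb1_3, cb1_4, cb1_5, cb2_0, cb2_1, cb2_2, cb2_3, cb2_4, cb2_5, cc_0, cc_1, cc_2, cc_3, cc_4, cc_5, cd6_0, cd6_1, cd6_2, cd6_3, cd6_4, cd6_5, Rd]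
  ring_nf

@[simp] lemma fq_0_3 : ((0:Fin 6) = 3) = False := by decide
@[simp] lemma fq_0_4 : ((0:Fin 6) = 4) = False := by decide
@[simp] lemma fq_0_5 : ((0:Fin 6) = 5) = False := by decide
@[simp] lemma fq_1_3 : ((1:Fin 6) = 3) = False := by decide
@[simp] lemma fq_1_4 : ((1:Fin 6) = 4) = False := by decide
@[simp] lemma fq_1_5 : ((1:Fin 6) = 5) = False := by decide
@[simp] lemma fq_2_3 : ((2:Fin 6) = 3) = False := by decide
@[simp] lemma fq_2_4 : ((2:Fin 6) = 4) = False := by decide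
@[simp] lemma fq_2_5 : ((2:Fin 6) = 5) = False := by decide
@[simp] lemma fq_3_3 : ((3:Fin 6) = 3) = True := by decide
@[simp] lemma fq_3_4 : ((3:Fin 6) = 4) = False := by decide
@[simp] lemma fq_3_5 : ((3:Fin 6) = 5) = False := by decide
@[simp] lemma fq_4_3 : ((4:Fin 6) = 3) = False := by decide
@[simp] lemma fq_4_4 : ((4:Fin 6) = 4) = True := by decide
@[simp] lemma fq_4_5 : ((4:Fin 6) = 5) = False := by decide
@[simp] lemma fq_5_3 : ((5:Fin 6) = 3) = False := by decide
@[simp] lemma fq_5_4 : ((5:Fin 6) = 4) = False := by decide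
@[simp] lemma fq_5_5 : ((5:Fin 6) = 5) = True := by decide

lemma commz_0 (f : F6) (hf : ContDiff ℝ (⊤ : ℕ∞) f) :
    opComm Ra1 Ra2 f = 0 := by
  have h : opComm Ra1 Ra2 f = opComm (T ca1) (T ca2) f := by
    simp only [opComm, Ra1_eq, Ra2_eq]
  rw [h, comm_T ca1 ca2 hca1 hca2 f hf]
  funext x
  simp only [Fin.sum_univ_six, ca1_0, ca1_1, ca1_2, ca1_3, ca1_4, ca1_5,
    ca2_0, ca2_1, ca2_2, ca2_3, ca2_4, ca2_5, cb1_0, cb1_1, cb1_2, cb1_3, cb1_4, cb1_5,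
    cb2_0, cb2_1, cb2_2, cb2_3, cb2_4, cb2_5, cc_0, cc_1, cc_2, cc_3, cc_4, cc_5,
    cd6_0, cd6_1, cd6_2, cd6_3, cd6_4, cd6_5,
    pd_const, pd_g1, pd_g2, pd_g3, pd_g4, pd_g5, Rc, Ra1, Rb1, Pi.zero_apply]
  norm_num
  try ring

lemma commz_1 (f : F6) (hf : ContDiff ℝ (⊤ : ℕ∞) f) :
    opComm Ra1 Rb1 f = 0 := by
  have h : opComm Ra1 Rb1 f = opComm (T ca1) (T cb1) f := by
    simp only [opComm, Ra1_eq, Rb1_eq]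
  rw [h, comm_T ca1 cb1 hca1 hcb1 f hf]
  funext x
  simp only [Fin.sum_univ_six, ca1_0, ca1_1, ca1_2, ca1_3, ca1_4, ca1_5,
    ca2_0, ca2_1, ca2_2, ca2_3, ca2_4, ca2_5, cb1_0, cb1_1, cb1_2, cb1_3, cb1_4, cb1_5,
    cb2_0, cb2_1, cb2_2, cb2_3, cb2_4, cb2_5, cc_0, cc_1, cc_2, cc_3, cc_4, cc_5,
    cd6_0, cd6_1, cd6_2, cd6_3, cd6_4, cd6_5,
    pd_const, pd_g1, pd_g2, pd_g3, pd_g4, pd_g5, Rc, Ra1, Rb1, Pi.zero_apply]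
  norm_num
  try ring

lemma commz_2 (f : F6) (hf : ContDiff ℝ (⊤ : ℕ∞) f) :
    opComm Ra1 Rb2 f = 0 := by
  have h : opComm Ra1 Rb2 f = opComm (T ca1) (T cb2) f := by
    simp only [opComm, Ra1_eq, Rb2_eq]
  rw [h, comm_T ca1 cb2 hca1 hcb2 f hf]
  funext x
  simp only [Fin.sum_univ_six, ca1_0, ca1_1, ca1_2, ca1_3, ca1_4, ca1_5,
    ca2_0, ca2_1, ca2_2, ca2_3, ca2_4, ca2_5, cb1_0, cb1_1, cb1_2, cb1_3, cb1_4, cb1_5,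
    cb2_0, cb2_1, cb2_2, cb2_3, cb2_4, cb2_5, cc_0, cc_1, cc_2, cc_3, cc_4, cc_5,
    cd6_0, cd6_1, cd6_2, cd6_3, cd6_4, cd6_5,
    pd_const, pd_g1, pd_g2, pd_g3, pd_g4, pd_g5, Rc, Ra1, Rb1, Pi.zero_apply]
  norm_num
  try ring

lemma commz_3 (f : F6) (hf : ContDiff ℝ (⊤ : ℕ∞) f) :
    opComm Ra1 Rc f = 0 := by
  have h : opComm Ra1 Rc f = opComm (T ca1) (T cc) f := by
    simp only [opComm, Ra1_eq, Rc_eq]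
  rw [h, comm_T ca1 cc hca1 hcc f hf]
  funext x
  simp only [Fin.sum_univ_six, ca1_0, ca1_1, ca1_2, ca1_3, ca1_4, ca1_5,
    ca2_0, ca2_1, ca2_2, ca2_3, ca2_4, ca2_5, cb1_0, cb1_1, cb1_2, cb1_3, cb1_4, cb1_5,
    cb2_0, cb2_1, cb2_2, cb2_3, cb2_4, cb2_5, cc_0, cc_1, cc_2, cc_3, cc_4, cc_5,
    cd6_0, cd6_1, cd6_2, cd6_3, cd6_4, cd6_5,
    pd_const, pd_g1, pd_g2, pd_g3, pd_g4, pd_g5, Rc, Ra1, Rb1, Pi.zero_apply]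
  norm_num
  try ring

lemma commz_4 (f : F6) (hf : ContDiff ℝ (⊤ : ℕ∞) f) :
    opComm Ra1 Rd f = 0 := by
  have h : opComm Ra1 Rd f = opComm (T ca1) (T cd6) f := by
    simp only [opComm, Ra1_eq, Rd_eq]
  rw [h, comm_T ca1 cd6 hca1 hcd6 f hf]
  funext x
  simp only [Fin.sum_univ_six, ca1_0, ca1_1, ca1_2, ca1_3, ca1_4, ca1_5,
    ca2_0, ca2_1, ca2_2, ca2_3, ca2_4, ca2_5, cb1_0, cb1_1, cb1_2, cb1_3, cb1_4, cb1_5,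
    cb2_0, cb2_1, cb2_2, cb2_3, cb2_4, cb2_5, cc_0, cc_1, cc_2, cc_3, cc_4, cc_5,
    cd6_0, cd6_1, cd6_2, cd6_3, cd6_4, cd6_5,
    pd_const, pd_g1, pd_g2, pd_g3, pd_g4, pd_g5, Rc, Ra1, Rb1, Pi.zero_apply]
  norm_num
  try ring

lemma commz_5 (f : F6) (hf : ContDiff ℝ (⊤ : ℕ∞) f) :
    opComm Ra2 Rb1 f = 0 := by
  have h : opComm Ra2 Rb1 f = opComm (T ca2) (T cb1) f := by
    simp only [opComm, Ra2_eq, Rb1_eq]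
  rw [h, comm_T ca2 cb1 hca2 hcb1 f hf]
  funext x
  simp only [Fin.sum_univ_six, ca1_0, ca1_1, ca1_2, ca1_3, ca1_4, ca1_5,
    ca2_0, ca2_1, ca2_2, ca2_3, ca2_4, ca2_5, cb1_0, cb1_1, cb1_2, cb1_3, cb1_4, cb1_5,
    cb2_0, cb2_1, cb2_2, cb2_3, cb2_4, cb2_5, cc_0, cc_1, cc_2, cc_3, cc_4, cc_5,
    cd6_0, cd6_1, cd6_2, cd6_3, cd6_4, cd6_5,
    pd_const, pd_g1, pd_g2, pd_g3, pd_g4, pd_g5, Rc, Ra1, Rb1, Pi.zero_apply]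
  norm_num
  try ring

lemma commz_6 (f : F6) (hf : ContDiff ℝ (⊤ : ℕ∞) f) :
    opComm Ra2 Rb2 f = 0 := by
  have h : opComm Ra2 Rb2 f = opComm (T ca2) (T cb2) f := by
    simp only [opComm, Ra2_eq, Rb2_eq]
  rw [h, comm_T ca2 cb2 hca2 hcb2 f hf]
  funext x
  simp only [Fin.sum_univ_six, ca1_0, ca1_1, ca1_2, ca1_3, ca1_4, ca1_5,
    ca2_0, ca2_1, ca2_2, ca2_3, ca2_4, ca2_5, cb1_0, cb1_1, cb1_2, cb1_3, cb1_4, cb1_5,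
    cb2_0, cb2_1, cb2_2, cb2_3, cb2_4, cb2_5, cc_0, cc_1, cc_2, cc_3, cc_4, cc_5,
    cd6_0, cd6_1, cd6_2, cd6_3, cd6_4, cd6_5,
    pd_const, pd_g1, pd_g2, pd_g3, pd_g4, pd_g5, Rc, Ra1, Rb1, Pi.zero_apply]
  norm_num
  try ring

lemma commz_7 (f : F6) (hf : ContDiff ℝ (⊤ : ℕ∞) f) :
    opComm Ra2 Rc f = 0 := by
  have h : opComm Ra2 Rc f = opComm (T ca2) (T cc) f := by
    simp only [opComm, Ra2_eq, Rc_eq]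
  rw [h, comm_T ca2 cc hca2 hcc f hf]
  funext x
  simp only [Fin.sum_univ_six, ca1_0, ca1_1, ca1_2, ca1_3, ca1_4, ca1_5,
    ca2_0, ca2_1, ca2_2, ca2_3, ca2_4, ca2_5, cb1_0, cb1_1, cb1_2, cb1_3, cb1_4, cb1_5,
    cb2_0, cb2_1, cb2_2, cb2_3, cb2_4, cb2_5, cc_0, cc_1, cc_2, cc_3, cc_4, cc_5,
    cd6_0, cd6_1, cd6_2, cd6_3, cd6_4, cd6_5,
    pd_const, pd_g1, pd_g2, pd_g3, pd_g4, pd_g5, Rc, Ra1, Rb1, Pi.zero_apply]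
  norm_num
  try ring

lemma commz_8 (f : F6) (hf : ContDiff ℝ (⊤ : ℕ∞) f) :
    opComm Rb1 Rb2 f = 0 := by
  have h : opComm Rb1 Rb2 f = opComm (T cb1) (T cb2) f := by
    simp only [opComm, Rb1_eq, Rb2_eq]
  rw [h, comm_T cb1 cb2 hcb1 hcb2 f hf]
  funext x
  simp only [Fin.sum_univ_six, ca1_0, ca1_1, ca1_2, ca1_3, ca1_4, ca1_5,
    ca2_0, ca2_1, ca2_2, ca2_3, ca2_4, ca2_5, cb1_0, cb1_1, cb1_2, cb1_3, cb1_4, cb1_5,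
    cb2_0, cb2_1, cb2_2, cb2_3, cb2_4, cb2_5, cc_0, cc_1, cc_2, cc_3, cc_4, cc_5,
    cd6_0, cd6_1, cd6_2, cd6_3, cd6_4, cd6_5,
    pd_const, pd_g1, pd_g2, pd_g3, pd_g4, pd_g5, Rc, Ra1, Rb1, Pi.zero_apply]
  norm_num
  try ring

lemma commz_9 (f : F6) (hf : ContDiff ℝ (⊤ : ℕ∞) f) :
    opComm Rb1 Rc f = 0 := by
  have h : opComm Rb1 Rc f = opComm (T cb1) (T cc) f := by
    simp only [opComm, Rb1_eq, Rc_eq]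
  rw [h, comm_T cb1 cc hcb1 hcc f hf]
  funext x
  simp only [Fin.sum_univ_six, ca1_0, ca1_1, ca1_2, ca1_3, ca1_4, ca1_5,
    ca2_0, ca2_1, ca2_2, ca2_3, ca2_4, ca2_5, cb1_0, cb1_1, cb1_2, cb1_3, cb1_4, cb1_5,
    cb2_0, cb2_1, cb2_2, cb2_3, cb2_4, cb2_5, cc_0, cc_1, cc_2, cc_3, cc_4, cc_5,
    cd6_0, cd6_1, cd6_2, cd6_3, cd6_4, cd6_5,
    pd_const, pd_g1, pd_g2, pd_g3, pd_g4, pd_g5, Rc, Ra1, Rb1, Pi.zero_apply]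
  norm_num
  try ring

lemma commz_10 (f : F6) (hf : ContDiff ℝ (⊤ : ℕ∞) f) :
    opComm Rb1 Rd f = 0 := by
  have h : opComm Rb1 Rd f = opComm (T cb1) (T cd6) f := by
    simp only [opComm, Rb1_eq, Rd_eq]
  rw [h, comm_T cb1 cd6 hcb1 hcd6 f hf]
  funext x
  simp only [Fin.sum_univ_six, ca1_0, ca1_1, ca1_2, ca1_3, ca1_4, ca1_5,
    ca2_0, ca2_1, ca2_2, ca2_3, ca2_4, ca2_5, cb1_0, cb1_1, cb1_2, cb1_3, cb1_4, cb1_5,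
    cb2_0, cb2_1, cb2_2, cb2_3, cb2_4, cb2_5, cc_0, cc_1, cc_2, cc_3, cc_4, cc_5,
    cd6_0, cd6_1, cd6_2, cd6_3, cd6_4, cd6_5,
    pd_const, pd_g1, pd_g2, pd_g3, pd_g4, pd_g5, Rc, Ra1, Rb1, Pi.zero_apply]
  norm_num
  try ring

lemma commz_11 (f : F6) (hf : ContDiff ℝ (⊤ : ℕ∞) f) :
    opComm Rb2 Rc f = 0 := by
  have h : opComm Rb2 Rc f = opComm (T cb2) (T cc) f := by
    simp only [opComm, Rb2_eq, Rc_eq]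
  rw [h, comm_T cb2 cc hcb2 hcc f hf]
  funext x
  simp only [Fin.sum_univ_six, ca1_0, ca1_1, ca1_2, ca1_3, ca1_4, ca1_5,
    ca2_0, ca2_1, ca2_2, ca2_3, ca2_4, ca2_5, cb1_0, cb1_1, cb1_2, cb1_3, cb1_4, cb1_5,
    cb2_0, cb2_1, cb2_2, cb2_3, cb2_4, cb2_5, cc_0, cc_1, cc_2, cc_3, cc_4, cc_5,
    cd6_0, cd6_1, cd6_2, cd6_3, cd6_4, cd6_5,
    pd_const, pd_g1, pd_g2, pd_g3, pd_g4, pd_g5, Rc, Ra1, Rb1, Pi.zero_apply]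
  norm_num
  try ring

lemma comm_b2d (f : F6) (hf : ContDiff ℝ (⊤ : ℕ∞) f) :
    opComm Rb2 Rd f = fun x => -(Rc f x) := by
  have h : opComm Rb2 Rd f = opComm (T cb2) (T cd6) f := by
    simp only [opComm, Rb2_eq, Rd_eq]
  rw [h, comm_T cb2 cd6 hcb2 hcd6 f hf]
  funext x
  simp only [Fin.sum_univ_six, ca1_0, ca1_1, ca1_2, ca1_3, ca1_4, ca1_5,
    ca2_0, ca2_1, ca2_2, ca2_3, ca2_4, ca2_5, cb1_0, cb1_1, cb1_2, cb1_3, cb1_4, cb1_5,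
    cb2_0, cb2_1, cb2_2, cb2_3, cb2_4, cb2_5, cc_0, cc_1, cc_2, cc_3, cc_4, cc_5,
    cd6_0, cd6_1, cd6_2, cd6_3, cd6_4, cd6_5,
    pd_const, pd_g1, pd_g2, pd_g3, pd_g4, pd_g5, Rc, Ra1, Rb1, Pi.zero_apply]
  norm_num
  try ring

lemma comm_a2d (f : F6) (hf : ContDiff ℝ (⊤ : ℕ∞) f) :
    opComm Ra2 Rd f = fun x => -(1/2) * Ra1 f x := by
  have h : opComm Ra2 Rd f = opComm (T ca2) (T cd6) f := by
    simp only [opComm, Ra2_eq, Rd_eq]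
  rw [h, comm_T ca2 cd6 hca2 hcd6 f hf]
  funext x
  simp only [Fin.sum_univ_six, ca1_0, ca1_1, ca1_2, ca1_3, ca1_4, ca1_5,
    ca2_0, ca2_1, ca2_2, ca2_3, ca2_4, ca2_5, cb1_0, cb1_1, cb1_2, cb1_3, cb1_4, cb1_5,
    cb2_0, cb2_1, cb2_2, cb2_3, cb2_4, cb2_5, cc_0, cc_1, cc_2, cc_3, cc_4, cc_5,
    cd6_0, cd6_1, cd6_2, cd6_3, cd6_4, cd6_5,
    pd_const, pd_g1, pd_g2, pd_g3, pd_g4, pd_g5, Rc, Ra1, Rb1, Pi.zero_apply]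
  norm_num
  try ring

lemma comm_cd (f : F6) (hf : ContDiff ℝ (⊤ : ℕ∞) f) :
    opComm Rc Rd f = fun x => -(1/2) * Rb1 f x := by
  have h : opComm Rc Rd f = opComm (T cc) (T cd6) f := by
    simp only [opComm, Rc_eq, Rd_eq]
  rw [h, comm_T cc cd6 hcc hcd6 f hf]
  funext x
  simp only [Fin.sum_univ_six, ca1_0, ca1_1, ca1_2, ca1_3, ca1_4, ca1_5,
    ca2_0, ca2_1, ca2_2, ca2_3, ca2_4, ca2_5, cb1_0, cb1_1, cb1_2, cb1_3, cb1_4, cb1_5,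
    cb2_0, cb2_1, cb2_2, cb2_3, cb2_4, cb2_5, cc_0, cc_1, cc_2, cc_3, cc_4, cc_5,
    cd6_0, cd6_1, cd6_2, cd6_3, cd6_4, cd6_5,
    pd_const, pd_g1, pd_g2, pd_g3, pd_g4, pd_g5, Rc, Ra1, Rb1, Pi.zero_apply]
  norm_num
  try ring

lemma opComm_self (A : Op) (f : F6) : opComm A A f = 0 := sub_self _

lemma comm_swap_zero {A B : Op} {f : F6} (h : opComm A B f = 0) : opComm B A f = 0 := by
  funext x
  have h2 := congrFun h x
  simp only [opComm, Pi.sub_apply, Pi.zero_apply, sub_eq_zero] at h2 ⊢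
  exact h2.symm

theorem stmt_2 (f : F6) (hf : ContDiff ℝ (⊤ : ℕ∞) f) :
    (opComm Rb2 Rd f = fun x => -(Rc f x)) ∧
    (opComm Ra2 Rd f = fun x => -(1/2) * Ra1 f x) ∧
    (opComm Rc Rd f = fun x => -(1/2) * Rb1 f x) ∧
    (∀ i j : Fin 6,
      ¬((i = 3 ∧ j = 5) ∨ (i = 5 ∧ j = 3) ∨ (i = 1 ∧ j = 5) ∨ (i = 5 ∧ j = 1) ∨
        (i = 4 ∧ j = 5) ∨ (i = 5 ∧ j = 4)) →
      opComm (![Ra1, Ra2, Rb1, Rb2, Rc, Rd] i) (![Ra1, Ra2, Rb1, Rb2, Rc, Rd] j) f = 0) := by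
  refine ⟨comm_b2d f hf, comm_a2d f hf, comm_cd f hf, ?_⟩
  intro i j hij
  fin_cases i <;> fin_cases j
  exacts [opComm_self _ f, commz_0 f hf, commz_1 f hf, commz_2 f hf, commz_3 f hf, commz_4 f hf,
    comm_swap_zero (commz_0 f hf), opComm_self _ f, commz_5 f hf, commz_6 f hf, commz_7 f hf,
      (hij (by decide)).elim,
    comm_swap_zero (commz_1 f hf), comm_swap_zero (commz_5 f hf), opComm_self _ f,
      commz_8 f hf, commz_9 f hf, commz_10 f hf,
    comm_swap_zero (commz_2 f hf), comm_swap_zero (commz_6 f hf), comm_swap_zero (commz_8 f hf),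
      opComm_self _ f, commz_11 f hf, (hij (by decide)).elim,
    comm_swap_zero (commz_3 f hf), comm_swap_zero (commz_7 f hf), comm_swap_zero (commz_9 f hf),
      comm_swap_zero (commz_11 f hf), opComm_self _ f, (hij (by decide)).elim,
    comm_swap_zero (commz_4 f hf), (hij (by decide)).elim, comm_swap_zero (commz_10 f hf),
      (hij (by decide)).elim, (hij (by decide)).elim, opComm_self _ f]
end

section
/- In the universal enveloping algebra of the Jacobi algebra G_2, the hatted elements b̂_k^+ = b_k^+ − (1/2)(a_k^+)² (k = 1,2) and ĉ^+ = c^+ − (1/2)a_1^+a_2^+ satisfy: [b̂_1^+, b̂_2^+] = [b̂_1^+, ĉ^+] = [b̂_2^+, ĉ^+] = 0, [b̂_2^+, d^+] = −ĉ^+, and [ĉ^+, d^+] = −(1/2)b̂_1^+. -/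
/-!
The elements a₁⁺, a₂⁺, b₁⁺, b₂⁺, c⁺ commute pairwise, hence so do the hatted elements. Since ad d⁺
is a derivation of the associative product, [a₂⁺a₂⁺, d⁺] = −a₁⁺a₂⁺ and [a₁⁺a₂⁺, d⁺] = −½(a₁⁺)²:
the quadratic corrections transform under d⁺ exactly as b₂⁺ and c⁺ do, which gives the last two
identities.
-/

theorem Ring.mul_lie {A : Type*} [Ring A] (x y z : A) :
    ⁅x * y, z⁆ = x * ⁅y, z⁆ + ⁅x, z⁆ * y := by
  simp only [lie_def]
  noncomm_ring

theorem Ring.sub_smul_mul_lie {R A : Type*} [CommRing R] [Ring A] [Algebra R A]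
    (r : R) (x y z w : A) :
    ⁅x - r • (y * z), w⁆ = ⁅x, w⁆ - r • (y * ⁅z, w⁆ + ⁅y, w⁆ * z) := by
  let := LieRing.ofAssociativeRing (A := A)
  let := LieAlgebra.ofAssociativeAlgebra (R := R) (A := A)
  rw [sub_lie, smul_lie, Ring.mul_lie]

theorem stmt_8_general {A : Type*} [Ring A] [Algebra ℝ A]
    (a1 a2 b1 b2 c d : A)
    -- all brackets among a₁⁺, a₂⁺, b₁⁺, b₂⁺, c⁺ vanish
    (h12 : ⁅a1, a2⁆ = 0)
    (ha1b1 : ⁅a1, b1⁆ = 0) (ha1b2 : ⁅a1, b2⁆ = 0) (ha1c : ⁅a1, c⁆ = 0)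
    (ha2b1 : ⁅a2, b1⁆ = 0) (ha2b2 : ⁅a2, b2⁆ = 0) (ha2c : ⁅a2, c⁆ = 0)
    (hb1b2 : ⁅b1, b2⁆ = 0) (hb1c : ⁅b1, c⁆ = 0) (hb2c : ⁅b2, c⁆ = 0)
    -- brackets with d⁺
    (ha1d : ⁅a1, d⁆ = 0)
    (hb2d : ⁅b2, d⁆ = -c)
    (ha2d : ⁅a2, d⁆ = -((1/2 : ℝ) • a1))
    (hcd : ⁅c, d⁆ = -((1/2 : ℝ) • b1)) :
    ⁅b1 - (1/2 : ℝ) • (a1 * a1), b2 - (1/2 : ℝ) • (a2 * a2)⁆ = 0 ∧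
    ⁅b1 - (1/2 : ℝ) • (a1 * a1), c - (1/2 : ℝ) • (a1 * a2)⁆ = 0 ∧
    ⁅b2 - (1/2 : ℝ) • (a2 * a2), c - (1/2 : ℝ) • (a1 * a2)⁆ = 0 ∧
    ⁅b2 - (1/2 : ℝ) • (a2 * a2), d⁆ = -(c - (1/2 : ℝ) • (a1 * a2)) ∧
    ⁅c - (1/2 : ℝ) • (a1 * a2), d⁆ = -((1/2 : ℝ) • (b1 - (1/2 : ℝ) • (a1 * a1))) := by
  rw [← commute_iff_lie_eq] at h12 ha1b1 ha1b2 ha1c ha2b1 ha2b2 ha2c hb1b2 hb1c hb2c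
  refine ⟨Commute.lie_eq ?_, Commute.lie_eq ?_, Commute.lie_eq ?_, ?_, ?_⟩
  iterate 3 apply_rules [Commute.sub_left, Commute.sub_right, Commute.smul_left,
    Commute.smul_right, Commute.mul_left, Commute.mul_right, Commute.refl]
  · rw [Ring.sub_smul_mul_lie, hb2d, ha2d, mul_neg, neg_mul, mul_smul_comm, smul_mul_assoc,
      h12.symm.eq]
    module
  · rw [Ring.sub_smul_mul_lie, hcd, ha2d, ha1d, zero_mul, add_zero, mul_neg, mul_smul_comm]
    module

/-- In the universal enveloping algebra of the Jacobi algebra 𝒢₂ (modelled as an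
associative ℝ-algebra `A` containing elements a₁⁺, a₂⁺, b₁⁺, b₂⁺, c⁺, d⁺ satisfying
the bracket relations of 𝒢₂⁺, with ⁅x,y⁆ = x*y − y*x), the hatted elements
b̂ₖ⁺ = bₖ⁺ − (1/2)(aₖ⁺)² and ĉ⁺ = c⁺ − (1/2)a₁⁺a₂⁺ satisfy
[b̂₁⁺,b̂₂⁺] = [b̂₁⁺,ĉ⁺] = [b̂₂⁺,ĉ⁺] = 0, [b̂₂⁺,d⁺] = −ĉ⁺, [ĉ⁺,d⁺] = −(1/2)b̂₁⁺. -/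
theorem stmt_8 {A : Type*} [Ring A] [Algebra ℝ A]
    (a1 a2 b1 b2 c d : A)
    -- all brackets among a₁⁺, a₂⁺, b₁⁺, b₂⁺, c⁺ vanish
    (h12 : ⁅a1, a2⁆ = 0)
    (ha1b1 : ⁅a1, b1⁆ = 0) (ha1b2 : ⁅a1, b2⁆ = 0) (ha1c : ⁅a1, c⁆ = 0)
    (ha2b1 : ⁅a2, b1⁆ = 0) (ha2b2 : ⁅a2, b2⁆ = 0) (ha2c : ⁅a2, c⁆ = 0)
    (hb1b2 : ⁅b1, b2⁆ = 0) (hb1c : ⁅b1, c⁆ = 0) (hb2c : ⁅b2, c⁆ = 0)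
    -- brackets with d⁺
    (ha1d : ⁅a1, d⁆ = 0) (hb1d : ⁅b1, d⁆ = 0)
    (hb2d : ⁅b2, d⁆ = -c)
    (ha2d : ⁅a2, d⁆ = -((1/2 : ℝ) • a1))
    (hcd : ⁅c, d⁆ = -((1/2 : ℝ) • b1)) :
    ⁅b1 - (1/2 : ℝ) • (a1 * a1), b2 - (1/2 : ℝ) • (a2 * a2)⁆ = 0 ∧
    ⁅b1 - (1/2 : ℝ) • (a1 * a1), c - (1/2 : ℝ) • (a1 * a2)⁆ = 0 ∧
    ⁅b2 - (1/2 : ℝ) • (a2 * a2), c - (1/2 : ℝ) • (a1 * a2)⁆ = 0 ∧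
    ⁅b2 - (1/2 : ℝ) • (a2 * a2), d⁆ = -(c - (1/2 : ℝ) • (a1 * a2)) ∧
    ⁅c - (1/2 : ℝ) • (a1 * a2), d⁆ = -((1/2 : ℝ) • (b1 - (1/2 : ℝ) • (a1 * a1))) :=
  stmt_8_general a1 a2 b1 b2 c d h12 ha1b1 ha1b2 ha1c ha2b1 ha2b2 ha2c hb1b2 hb1c hb2c ha1d hb2d
    ha2d hcd
end
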